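/- The peak height distribution function F(x) = 1 − Φ(x/(σ√(1−η²))) + √(2π)·η·φ(x/σ)·Φ(ηx/(σ√(1−η²))), for parameters σ > 0 and η ∈ (0,1), is a valid survival function: F is continuous, strictly decreasing on ℝ, lim_{x→−∞} F(x) = 1, and lim_{x→+∞} F(x) = 0. -/

import Mathlib

open Filter

/-- Standard normal pdf. -/
noncomputable def phi (x : ℝ) : ℝ := (Real.sqrt (2 * Real.pi))⁻¹ * Real.exp (-x ^ 2 / 2)

/-- Standard normal cdf. -/
noncomputable def Phi (x : ℝ) : ℝ := ∫ u in Set.Iic x, phi u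

/-- Peak height distribution (survival function). -/
noncomputable def peakF (σ η : ℝ) (x : ℝ) : ℝ :=
  1 - Phi (x / (σ * Real.sqrt (1 - η ^ 2)))
    + Real.sqrt (2 * Real.pi) * η * phi (x / σ) * Phi (η * x / (σ * Real.sqrt (1 - η ^ 2)))

open MeasureTheory Real Set

lemma phi_pos (x : ℝ) : 0 < phi x := by
  unfold phi
  have : 0 < Real.sqrt (2 * Real.pi) := Real.sqrt_pos.mpr (by positivity)
  positivity

lemma phi_eq : phi = fun x => (Real.sqrt (2 * Real.pi))⁻¹ * Real.exp (-(1/2 : ℝ) * x ^ 2) := by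
  funext x; unfold phi; ring_nf

lemma continuous_phi : Continuous phi := by
  unfold phi; fun_prop

lemma integrable_phi : Integrable phi := by
  rw [phi_eq]
  exact (integrable_exp_neg_mul_sq (by norm_num : (0:ℝ) < 1/2)).const_mul _

lemma integral_phi : ∫ x, phi x = 1 := by
  rw [phi_eq, MeasureTheory.integral_const_mul, integral_gaussian]
  rw [show (Real.pi / (1/2)) = 2 * Real.pi by ring]
  rw [inv_mul_cancel₀ (Real.sqrt_ne_zero'.mpr (by positivity))]

lemma hasDerivAt_Phi (x : ℝ) : HasDerivAt Phi (phi x) x := by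
  have hPhi : Phi = fun b => Phi 0 + ∫ u in (0:ℝ)..b, phi u := by
    funext b
    have := intervalIntegral.integral_Iic_sub_Iic (μ := volume) (f := phi)
      integrable_phi.integrableOn integrable_phi.integrableOn (a := 0) (b := b)
    unfold Phi
    rw [← this]; ring
  rw [hPhi]
  exact ((intervalIntegral.integral_hasDerivAt_right
    (integrable_phi.intervalIntegrable)
    (continuous_phi.stronglyMeasurableAtFilter _ _)
    continuous_phi.continuousAt).const_add _)


lemma tendsto_Phi_atTop : Tendsto Phi atTop (nhds 1) := by
  have h := tendsto_setIntegral_of_monotone (μ := volume) (f := phi)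
    (s := fun x : ℝ => Iic x) (fun i => measurableSet_Iic)
    (fun i j h => Iic_subset_Iic.mpr h) integrable_phi.integrableOn
  have h' : Tendsto (fun i => ∫ x in Iic i, phi x) atTop (nhds 1) := by
    simpa [Set.iUnion_Iic, integral_phi] using h
  exact h'

lemma tendsto_Phi_atBot : Tendsto Phi atBot (nhds 0) := by
  have h := tendsto_setIntegral_of_antitone (μ := volume) (f := phi)
    (s := fun x : ℝ => Iic (-x)) (fun i => measurableSet_Iic)
    (fun i j h => Iic_subset_Iic.mpr (by linarith)) ⟨0, integrable_phi.integrableOn⟩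
  have hempty : (⋂ x : ℝ, Iic (-x)) = (∅ : Set ℝ) := by
    ext u; simp only [mem_iInter, mem_Iic, mem_empty_iff_false, iff_false, not_forall]
    exact ⟨-(u - 1), by push_neg; linarith⟩
  rw [hempty] at h
  simp only [Measure.restrict_empty, integral_zero_measure] at h
  have h2 := h.comp tendsto_neg_atBot_atTop
  refine h2.congr fun x => ?_
  simp [Function.comp, Phi]

lemma Phi_nonneg (x : ℝ) : 0 ≤ Phi x :=
  setIntegral_nonneg measurableSet_Iic (fun u _ => (phi_pos u).le)

lemma Phi_pos (x : ℝ) : 0 < Phi x := by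
  rw [Phi, setIntegral_pos_iff_support_of_nonneg_ae
    (Filter.Eventually.of_forall (fun u => (phi_pos u).le)) integrable_phi.integrableOn]
  have : Function.support phi ∩ Iic x = Iic x := by
    rw [inter_eq_right]; exact fun u _ => (phi_pos u).ne'
  rw [this]
  simp [Real.volume_Iic]

lemma tendsto_phi_of_sq (l : Filter ℝ) (h : Tendsto (fun x : ℝ => x ^ 2) l atTop) :
    Tendsto phi l (nhds 0) := by
  have h1 : Tendsto (fun x : ℝ => -x ^ 2 / 2) l atBot := by
    have h2 : Tendsto (fun x : ℝ => -x ^ 2) l atBot := tendsto_neg_atTop_atBot.comp h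
    exact h2.atBot_div_const (by norm_num)
  have h3 := (Real.tendsto_exp_atBot.comp h1).const_mul ((Real.sqrt (2 * Real.pi))⁻¹)
  simp only [Function.comp_def, mul_zero] at h3
  exact h3

lemma tendsto_sq_atTop : Tendsto (fun x : ℝ => x ^ 2) atTop atTop :=
  tendsto_pow_atTop (by norm_num)

lemma tendsto_sq_atBot : Tendsto (fun x : ℝ => x ^ 2) atBot atTop := by
  have := tendsto_sq_atTop.comp tendsto_neg_atBot_atTop
  refine this.congr fun x => ?_
  simp [Function.comp]

lemma tendsto_phi_atBot : Tendsto phi atBot (nhds 0) := tendsto_phi_of_sq _ tendsto_sq_atBot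

lemma tendsto_phi_atTop : Tendsto phi atTop (nhds 0) := tendsto_phi_of_sq _ tendsto_sq_atTop

lemma hasDerivAt_phi (x : ℝ) : HasDerivAt phi (-x * phi x) x := by
  have h1 : HasDerivAt (fun x : ℝ => -x ^ 2 / 2) (-x) x := by
    have := ((hasDerivAt_pow 2 x).neg).div_const 2
    refine this.congr_deriv ?_; push_cast; ring
  have := (h1.exp).const_mul ((Real.sqrt (2 * Real.pi))⁻¹)
  refine this.congr_deriv ?_
  unfold phi; ring

lemma integrable_id_mul_phi : Integrable (fun u : ℝ => -u * phi u) := by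
  have h : Integrable (fun x : ℝ => x * Real.exp (-(1/2 : ℝ) * x ^ 2)) :=
    integrable_mul_exp_neg_mul_sq (by norm_num)
  have := (h.const_mul (-(Real.sqrt (2 * Real.pi))⁻¹))
  refine this.congr (Filter.Eventually.of_forall fun x => ?_)
  simp only
  unfold phi
  rw [show (-(1/2 : ℝ) * x ^ 2) = -x ^ 2 / 2 by ring]
  ring

lemma integral_Iic_neg_mul_phi (t : ℝ) : ∫ u in Iic t, -u * phi u = phi t := by
  have := integral_Iic_of_hasDerivAt_of_tendsto' (f := phi) (f' := fun u => -u * phi u)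
    (a := t) (m := 0) (fun u _ => hasDerivAt_phi u) integrable_id_mul_phi.integrableOn
    tendsto_phi_atBot
  rw [this, sub_zero]

lemma g_pos (t : ℝ) : 0 < phi t + t * Phi t := by
  rcases le_or_gt 0 t with ht | ht
  · have := phi_pos t
    nlinarith [Phi_nonneg t]
  · have key : phi t + t * Phi t = ∫ u in Iic t, (t - u) * phi u := by
      have h1 : ∫ u in Iic t, (t - u) * phi u
          = (∫ u in Iic t, t * phi u) + ∫ u in Iic t, -u * phi u := by
        rw [← integral_add (integrable_phi.integrableOn.const_mul t)
          integrable_id_mul_phi.integrableOn]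
        congr 1; funext u; ring
      rw [h1, integral_Iic_neg_mul_phi, MeasureTheory.integral_const_mul]
      unfold Phi; ring
    rw [key]
    rw [setIntegral_pos_iff_support_of_nonneg_ae]
    · have hsub : Iio t ⊆ Function.support (fun u => (t - u) * phi u) ∩ Iic t := by
        intro u hu
        refine ⟨?_, le_of_lt (mem_Iio.mp hu)⟩
        simp only [Function.mem_support]
        have := phi_pos u
        have : 0 < (t - u) * phi u := by
          apply mul_pos _ (phi_pos u); simp at hu ⊢; linarith
        exact this.ne'
      calc (0 : ENNReal) < volume (Iio t) := by simp [Real.volume_Iio]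
        _ ≤ _ := measure_mono hsub
    · filter_upwards [MeasureTheory.ae_restrict_mem measurableSet_Iic] with u hu
      simp only [Pi.zero_apply]
      exact mul_nonneg (by simp only [mem_Iic] at hu; linarith) (phi_pos u).le
    · have hI : Integrable (fun u : ℝ => (t - u) * phi u) := by
        have h2 := (integrable_phi.const_mul t).add integrable_id_mul_phi
        exact h2.congr (Filter.Eventually.of_forall fun u => by simp only [Pi.add_apply]; ring)
      exact hI.integrableOn


section
variable {σ η : ℝ} (hσ : 0 < σ) (hη₀ : 0 < η) (hη₁ : η < 1)

lemma sqrt_pos_1m (hη₀ : 0 < η) (hη₁ : η < 1) : 0 < Real.sqrt (1 - η ^ 2) :=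
  Real.sqrt_pos.mpr (by nlinarith)

lemma phi_factor (hσ : 0 < σ) (hη₀ : 0 < η) (hη₁ : η < 1) (x : ℝ) :
    phi (x / (σ * Real.sqrt (1 - η ^ 2)))
      = Real.sqrt (2 * Real.pi) * phi (x / σ) * phi (η * x / (σ * Real.sqrt (1 - η ^ 2))) := by
  have hs := sqrt_pos_1m hη₀ hη₁
  have hs2 : Real.sqrt (1 - η ^ 2) ^ 2 = 1 - η ^ 2 := Real.sq_sqrt (by nlinarith)
  set s := Real.sqrt (1 - η ^ 2)
  have hexp : (-(x / (σ * s)) ^ 2 / 2)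
      = (-(x / σ) ^ 2 / 2) + (-(η * x / (σ * s)) ^ 2 / 2) := by
    field_simp
    linear_combination (x ^ 2 : ℝ) * hs2
  unfold phi
  rw [hexp, Real.exp_add]
  have hc : Real.sqrt (2 * Real.pi) ≠ 0 := (Real.sqrt_pos.mpr (by positivity)).ne'
  field_simp

lemma hasDerivAt_peakF (hσ : 0 < σ) (hη₀ : 0 < η) (hη₁ : η < 1) (x : ℝ) :
    HasDerivAt (peakF σ η)
      (-(Real.sqrt (2 * Real.pi) * phi (x / σ) * (Real.sqrt (1 - η ^ 2) / σ) *
        (phi (η * x / (σ * Real.sqrt (1 - η ^ 2)))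
          + (η * x / (σ * Real.sqrt (1 - η ^ 2)))
            * Phi (η * x / (σ * Real.sqrt (1 - η ^ 2)))))) x := by
  have hs := sqrt_pos_1m hη₀ hη₁
  have hs2 : Real.sqrt (1 - η ^ 2) ^ 2 = 1 - η ^ 2 := Real.sq_sqrt (by nlinarith)
  have ha : (0:ℝ) < σ * Real.sqrt (1 - η ^ 2) := by positivity
  set s := Real.sqrt (1 - η ^ 2) with hs_def
  set c := Real.sqrt (2 * Real.pi) with hc_def
  have h1 : HasDerivAt (fun y => Phi (y / (σ * s))) (phi (x / (σ * s)) * (1 / (σ * s))) x := by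
    have := (hasDerivAt_Phi (x / (σ * s))).comp x ((hasDerivAt_id x).div_const (σ * s))
    exact this
  have h2 : HasDerivAt (fun y => phi (y / σ)) ((-(x / σ) * phi (x / σ)) * (1 / σ)) x := by
    have := (hasDerivAt_phi (x / σ)).comp x ((hasDerivAt_id x).div_const σ)
    exact this
  have h3 : HasDerivAt (fun y => Phi (η * y / (σ * s)))
      (phi (η * x / (σ * s)) * (η / (σ * s))) x := by
    have hinner : HasDerivAt (fun y : ℝ => η * y / (σ * s)) (η / (σ * s)) x := by
      have := ((hasDerivAt_id x).const_mul η).div_const (σ * s)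
      simpa using this
    have := (hasDerivAt_Phi (η * x / (σ * s))).comp x hinner
    exact this
  have hD := ((hasDerivAt_const x (1:ℝ)).sub h1).add ((h2.const_mul (c * η)).mul h3)
  have hFeq : peakF σ η = fun y => 1 - Phi (y / (σ * s))
      + (c * η * phi (y / σ)) * Phi (η * y / (σ * s)) := by
    funext y; unfold peakF; rw [← hs_def, ← hc_def]
  rw [hFeq]
  refine hD.congr_deriv ?_
  rw [phi_factor hσ hη₀ hη₁ x, ← hs_def, ← hc_def]
  have hσ' : σ ≠ 0 := hσ.ne'
  have hs' : s ≠ 0 := hs.ne'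
  field_simp
  ring_nf
  linear_combination (c * σ * phi (x * σ⁻¹) * phi (x * σ⁻¹ * η * s⁻¹) : ℝ) * hs2
end


/-- The peak height distribution `F` is a valid survival function: continuous,
strictly decreasing, with limits 1 at `−∞` and 0 at `+∞`. -/
theorem stmt10 (σ η : ℝ) (hσ : 0 < σ) (hη₀ : 0 < η) (hη₁ : η < 1) :
    Continuous (peakF σ η)
    ∧ StrictAnti (peakF σ η)
    ∧ Tendsto (peakF σ η) atBot (nhds 1)
    ∧ Tendsto (peakF σ η) atTop (nhds 0) := by
  have hs := sqrt_pos_1m hη₀ hη₁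
  have ha : (0:ℝ) < σ * Real.sqrt (1 - η ^ 2) := by positivity
  have hc : (0:ℝ) < Real.sqrt (2 * Real.pi) := Real.sqrt_pos.mpr (by positivity)
  have hD := hasDerivAt_peakF hσ hη₀ hη₁
  have hneg : ∀ x : ℝ, (-(Real.sqrt (2 * Real.pi) * phi (x / σ) * (Real.sqrt (1 - η ^ 2) / σ) *
        (phi (η * x / (σ * Real.sqrt (1 - η ^ 2)))
          + (η * x / (σ * Real.sqrt (1 - η ^ 2)))
            * Phi (η * x / (σ * Real.sqrt (1 - η ^ 2)))))) < 0 := by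
    intro x
    have := g_pos (η * x / (σ * Real.sqrt (1 - η ^ 2)))
    have h2 := phi_pos (x / σ)
    have h3 : (0:ℝ) < Real.sqrt (1 - η ^ 2) / σ := by positivity
    nlinarith [mul_pos (mul_pos (mul_pos hc h2) h3) this]
  have hxa : Tendsto (fun x : ℝ => x / (σ * Real.sqrt (1 - η ^ 2))) atBot atBot :=
    tendsto_id.atBot_div_const ha
  have hxa' : Tendsto (fun x : ℝ => x / (σ * Real.sqrt (1 - η ^ 2))) atTop atTop :=
    tendsto_id.atTop_div_const ha
  have hxs : Tendsto (fun x : ℝ => x / σ) atBot atBot := tendsto_id.atBot_div_const hσ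
  have hxs' : Tendsto (fun x : ℝ => x / σ) atTop atTop := tendsto_id.atTop_div_const hσ
  have hxt : Tendsto (fun x : ℝ => η * x / (σ * Real.sqrt (1 - η ^ 2))) atBot atBot :=
    (tendsto_id.const_mul_atBot hη₀).atBot_div_const ha
  have hxt' : Tendsto (fun x : ℝ => η * x / (σ * Real.sqrt (1 - η ^ 2))) atTop atTop :=
    (tendsto_id.const_mul_atTop hη₀).atTop_div_const ha
  refine ⟨?_, strictAnti_of_hasDerivAt_neg hD hneg, ?_, ?_⟩
  · exact (Differentiable.continuous fun x => (hD x).differentiableAt)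
  · have h1 := tendsto_Phi_atBot.comp hxa
    have h2 := tendsto_phi_atBot.comp hxs
    have h3 := tendsto_Phi_atBot.comp hxt
    have hl := ((tendsto_const_nhds (x := (1:ℝ)) (f := (atBot : Filter ℝ))).sub h1).add
      ((h2.const_mul (Real.sqrt (2 * Real.pi) * η)).mul h3)
    have h0 : (1:ℝ) - 0 + Real.sqrt (2 * Real.pi) * η * 0 * 0 = 1 := by ring
    rw [h0] at hl
    refine hl.congr fun x => ?_
    simp only [Function.comp_def]
    unfold peakF; ring
  · have h1 := tendsto_Phi_atTop.comp hxa'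
    have h2 := tendsto_phi_atTop.comp hxs'
    have h3 := tendsto_Phi_atTop.comp hxt'
    have hl := ((tendsto_const_nhds (x := (1:ℝ)) (f := (atTop : Filter ℝ))).sub h1).add
      ((h2.const_mul (Real.sqrt (2 * Real.pi) * η)).mul h3)
    have h0 : (1:ℝ) - 1 + Real.sqrt (2 * Real.pi) * η * 0 * 1 = 0 := by ring
    rw [h0] at hl
    refine hl.congr fun x => ?_
    simp only [Function.comp_def]
    unfold peakF; ring
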